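/- Let m ≥ 2 and f = xz·((xz)^{m−1} + y^{2m−2}) in C[x,y,z], a polynomial of degree d = 2m. Then for every integer j with 1 ≤ j ≤ d − 3, the complex vector space { (a,b,c) ∈ AR(f)_j : a_x + b_y + c_z = 0 } has dimension ⌊(j+1)/2⌋. -/

import Mathlib

/-!
With `n = m - 1` we have `f = xz((xz)^n + y^(2n))`, so `f_x = z·g`, `f_z = x·g` and
`f_y = 2n·xz·y^(2n-1)` for the cofactor `g = (n+1)(xz)^n + y^(2n)`. The cofactor is homogeneous of
degree `2n` and prime to `x`, `y`, `z`; hence in a syzygy `(a, b, c)` of degree `j < 2n` it divides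
`b`, forcing `b = 0`, and then `za + xc = 0` gives `(a, b, c) = h·(x, 0, -z)`. The divergence of
`h·(x, 0, -z)` is `x h_x - z h_z`, which vanishes exactly when every monomial of `h` has equal
`x`- and `z`-exponents. The monomials `x^a y^(j-1-2a) z^a` of degree `j - 1` number `⌊(j+1)/2⌋`.
-/

open MvPolynomial

/-- The ℂ-linear Jacobian map sending `(a,b,c)` to `a·f_x + b·f_y + c·f_z`. -/
noncomputable def jacC (f : MvPolynomial (Fin 3) ℂ) :
    (Fin 3 → MvPolynomial (Fin 3) ℂ) →ₗ[ℂ] MvPolynomial (Fin 3) ℂ where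
  toFun v := ∑ i, v i * pderiv i f
  map_add' a b := by simp [add_mul, Finset.sum_add_distrib]
  map_smul' c a := by simp [Finset.smul_sum, smul_mul_assoc]

/-- The ℂ-linear divergence map sending `(a,b,c)` to `a_x + b_y + c_z`. -/
noncomputable def divC :
    (Fin 3 → MvPolynomial (Fin 3) ℂ) →ₗ[ℂ] MvPolynomial (Fin 3) ℂ where
  toFun v := ∑ i, pderiv i (v i)
  map_add' a b := by simp [Finset.sum_add_distrib]
  map_smul' c a := by simp [Finset.smul_sum]

/-- The ℂ-vector space of Jacobian syzygies of `f` that are homogeneous of degree `j`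
and are annihilated by the divergence map. -/
noncomputable def V (f : MvPolynomial (Fin 3) ℂ) (j : ℕ) :
    Submodule ℂ (Fin 3 → MvPolynomial (Fin 3) ℂ) :=
  (Submodule.pi Set.univ fun _ => homogeneousSubmodule (Fin 3) ℂ j) ⊓
    LinearMap.ker (jacC f) ⊓ LinearMap.ker divC

namespace MvPolynomial

variable {σ R : Type*}

lemma eval_eq_zero_of_X_dvd [CommSemiring R] {i : σ} {p : MvPolynomial σ R} {a : σ → R}
    (hp : X i ∣ p) (ha : a i = 0) : eval a p = 0 := by
  obtain ⟨q, rfl⟩ := hp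
  simp [ha]

lemma coeff_X_mul_pderiv [CommSemiring R] (i : σ) (p : MvPolynomial σ R) (d : σ →₀ ℕ) :
    coeff d (X i * pderiv i p) = d i * coeff d p := by
  induction p using induction_on' with
  | monomial e c =>
    classical
    rw [X_mul_pderiv_monomial, coeff_smul, coeff_monomial]
    split_ifs with h
    · simp [h, nsmul_eq_mul]
    · simp
  | add p q hp hq => simp only [map_add, mul_add, coeff_add, hp, hq]

lemma X_mul_pderiv_eq_iff [CommRing R] [IsDomain R] [CharZero R] {i k : σ}
    {p : MvPolynomial σ R} :
    X i * pderiv i p = X k * pderiv k p ↔ ∀ d ∈ p.support, d i = d k := by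
  simp only [MvPolynomial.ext_iff, coeff_X_mul_pderiv, mem_support_iff]
  refine forall_congr' fun d => ?_
  rw [← sub_eq_zero, ← sub_mul, mul_eq_zero, sub_eq_zero, Nat.cast_inj]
  tauto

lemma IsHomogeneous.of_X_mul [CommSemiring R] {i : σ} {p : MvPolynomial σ R} {n : ℕ}
    (h : (X i * p).IsHomogeneous (n + 1)) : p.IsHomogeneous n := by
  intro d hd
  have := @h (Finsupp.single i 1 + d) (by rwa [coeff_X_mul])
  simp only [map_add, Finsupp.weight_single, Pi.one_apply, smul_eq_mul, mul_one] at this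
  omega

lemma IsHomogeneous.eq_zero_of_dvd [CommRing R] [IsDomain R] {p q : MvPolynomial σ R} {n : ℕ}
    (hq : q.IsHomogeneous n) (hlt : n < p.totalDegree) (hpq : p ∣ q) : q = 0 := by
  by_contra hq0
  obtain ⟨t, rfl⟩ := hpq
  have := hq.totalDegree hq0
  rw [totalDegree_mul_of_isDomain (left_ne_zero_of_mul hq0) (right_ne_zero_of_mul hq0)] at this
  omega

lemma exists_eq_X_mul_of_X_mul_add_X_mul_eq_zero [CommRing R] [IsDomain R] {i k : σ}
    (hik : i ≠ k) {a c : MvPolynomial σ R} (h : X k * a + X i * c = 0) :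
    ∃ b, a = X i * b ∧ c = -(X k * b) := by
  have hdvd : X i ∣ X k * a := ⟨-c, by linear_combination h⟩
  obtain ⟨b, rfl⟩ := (X_prime.dvd_or_dvd hdvd).resolve_left (by simpa using hik)
  refine ⟨b, rfl, ?_⟩
  have : X i * (c + X k * b) = 0 := by linear_combination h
  linear_combination (mul_eq_zero.mp this).resolve_left (X_ne_zero i)

end MvPolynomial

def xzBalanced (n : ℕ) : Set (Fin 3 →₀ ℕ) := {d | d.degree = n ∧ d 0 = d 2}

lemma xzBalanced_eq_range (n : ℕ) :
    xzBalanced n = Set.range fun a : Fin (n / 2 + 1) =>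
      Finsupp.single 0 (a : ℕ) + Finsupp.single 1 (n - 2 * a) + Finsupp.single 2 (a : ℕ) := by
  ext d
  simp only [xzBalanced, Set.mem_ofPred_eq, Set.mem_range, Finsupp.degree_eq_sum,
    Fin.sum_univ_three]
  constructor
  · rintro ⟨hdeg, h02⟩
    refine ⟨⟨d 0, by omega⟩, ?_⟩
    ext i
    fin_cases i <;>
      simp only [Fin.zero_eta, Fin.mk_one, Fin.reduceFinMk, Finsupp.add_apply, Finsupp.single_apply,
        Fin.reduceEq, ↓reduceIte] <;> omega
  · rintro ⟨a, rfl⟩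
    have := a.isLt
    simp only [Fin.isValue, Finsupp.add_apply, Finsupp.single_apply, Fin.reduceEq, ↓reduceIte]
    omega

lemma card_xzBalanced (n : ℕ) : Nat.card (xzBalanced n) = n / 2 + 1 := by
  rw [xzBalanced_eq_range, Nat.card_range_of_injective, Nat.card_eq_fintype_card, Fintype.card_fin]
  intro a b hab
  simpa [Fin.ext_iff] using DFunLike.congr_fun hab 0

lemma finrank_restrictSupport_xzBalanced (K : Type*) [Field K] (n : ℕ) :
    Module.finrank K (restrictSupport K (xzBalanced n)) = n / 2 + 1 := by
  rw [Module.finrank_eq_nat_card_basis (basisRestrictSupport K _), card_xzBalanced]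

lemma mem_restrictSupport_xzBalanced_iff {R : Type*} [CommRing R] [IsDomain R] [CharZero R]
    {n : ℕ} {p : MvPolynomial (Fin 3) R} :
    p ∈ restrictSupport R (xzBalanced n) ↔
      p.IsHomogeneous n ∧ X 0 * pderiv 0 p = X 2 * pderiv 2 p := by
  rw [X_mul_pderiv_eq_iff]
  simp only [mem_restrictSupport_iff, xzBalanced, Set.subset_def, Finset.mem_coe, IsHomogeneous,
    IsWeightedHomogeneous, mem_support_iff, Set.mem_ofPred_eq, Finsupp.degree_eq_weight_one]
  exact ⟨fun h => ⟨fun d hd => (h d hd).1, fun d hd => (h d hd).2⟩,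
    fun h d hd => ⟨h.1 hd, h.2 d hd⟩⟩

namespace XZCurve

noncomputable def poly (n : ℕ) : MvPolynomial (Fin 3) ℂ :=
  X 0 * X 2 * ((X 0 * X 2) ^ n + X 1 ^ (2 * n))

noncomputable def cofactor (n : ℕ) : MvPolynomial (Fin 3) ℂ :=
  (n + 1 : MvPolynomial (Fin 3) ℂ) * (X 0 * X 2) ^ n + X 1 ^ (2 * n)

lemma poly_eq (n : ℕ) : poly n = (X 0 * X 2) ^ (n + 1) + X 0 * X 2 * X 1 ^ (2 * n) := by
  rw [poly]; ring

lemma pderiv_zero_poly (n : ℕ) : pderiv 0 (poly n) = X 2 * cofactor n := by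
  rw [poly_eq, cofactor]
  simp only [map_add, pderiv_mul, pderiv_pow, pderiv_X_self, pderiv_X_of_ne, ne_eq, Fin.reduceEq,
    not_false_eq_true, add_tsub_cancel_right, Nat.cast_add, Nat.cast_one, Nat.cast_mul,
    Nat.cast_ofNat]
  ring

lemma pderiv_one_poly (n : ℕ) :
    pderiv 1 (poly n) = (2 * n : MvPolynomial (Fin 3) ℂ) * (X 0 * X 2 * X 1 ^ (2 * n - 1)) := by
  rw [poly_eq]
  simp only [map_add, pderiv_mul, pderiv_pow, pderiv_X_self, pderiv_X_of_ne, ne_eq, Fin.reduceEq,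
    not_false_eq_true, add_tsub_cancel_right, Nat.cast_add, Nat.cast_one, Nat.cast_mul,
    Nat.cast_ofNat]
  ring

lemma pderiv_two_poly (n : ℕ) : pderiv 2 (poly n) = X 0 * cofactor n := by
  rw [poly_eq, cofactor]
  simp only [map_add, pderiv_mul, pderiv_pow, pderiv_X_self, pderiv_X_of_ne, ne_eq, Fin.reduceEq,
    not_false_eq_true, add_tsub_cancel_right, Nat.cast_add, Nat.cast_one, Nat.cast_mul,
    Nat.cast_ofNat]
  ring

lemma isHomogeneous_cofactor (n : ℕ) : (cofactor n).IsHomogeneous (2 * n) := by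
  have hxz : ((X 0 * X 2 : MvPolynomial (Fin 3) ℂ) ^ n).IsHomogeneous (2 * n) := by
    simpa [mul_comm] using ((isHomogeneous_X ℂ 0).mul (isHomogeneous_X ℂ 2)).pow n
  have hC : (n + 1 : MvPolynomial (Fin 3) ℂ) = C (n + 1 : ℂ) := by simp
  rw [cofactor, hC]
  exact (hxz.C_mul _).add (isHomogeneous_X_pow 1 _)

lemma not_X_dvd_cofactor (n : ℕ) (i : Fin 3) : ¬ X i ∣ cofactor n := by
  intro h
  fin_cases i
  · have := eval_eq_zero_of_X_dvd (a := ![0, 1, 1]) h rfl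
    simp only [cofactor, map_add, map_mul, map_pow, map_natCast, map_one, eval_X,
      Matrix.cons_val_zero, Matrix.cons_val_one, Matrix.cons_val, mul_one, one_pow] at this
    exact_mod_cast this
  · have := eval_eq_zero_of_X_dvd (a := ![1, 0, 1]) h rfl
    simp only [cofactor, map_add, map_mul, map_pow, map_natCast, map_one, eval_X,
      Matrix.cons_val_zero, Matrix.cons_val_one, Matrix.cons_val, mul_one, one_pow] at this
    norm_cast at this
    exact absurd this (by positivity)
  · have := eval_eq_zero_of_X_dvd (a := ![1, 1, 0]) h rfl
    simp only [cofactor, map_add, map_mul, map_pow, map_natCast, map_one, eval_X,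
      Matrix.cons_val_zero, Matrix.cons_val_one, Matrix.cons_val, mul_zero, one_pow] at this
    exact_mod_cast this

end XZCurve

lemma jacC_apply (f : MvPolynomial (Fin 3) ℂ) (v : Fin 3 → MvPolynomial (Fin 3) ℂ) :
    jacC f v = v 0 * pderiv 0 f + v 1 * pderiv 1 f + v 2 * pderiv 2 f :=
  Fin.sum_univ_three _

lemma divC_apply (v : Fin 3 → MvPolynomial (Fin 3) ℂ) :
    divC v = pderiv 0 (v 0) + pderiv 1 (v 1) + pderiv 2 (v 2) :=
  Fin.sum_univ_three _

namespace XZCurve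

lemma jacC_poly (n : ℕ) (v : Fin 3 → MvPolynomial (Fin 3) ℂ) :
    jacC (poly n) v = cofactor n * (X 2 * v 0 + X 0 * v 2) +
      (2 * n : MvPolynomial (Fin 3) ℂ) * (X 0 * X 2 * X 1 ^ (2 * n - 1) * v 1) := by
  rw [jacC_apply, pderiv_zero_poly, pderiv_one_poly, pderiv_two_poly]
  ring

lemma cofactor_ne_zero (n : ℕ) : cofactor n ≠ 0 :=
  fun h => not_X_dvd_cofactor n 0 (h ▸ dvd_zero _)

lemma totalDegree_cofactor (n : ℕ) : (cofactor n).totalDegree = 2 * n :=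
  (isHomogeneous_cofactor n).totalDegree (cofactor_ne_zero n)

lemma isRelPrime_cofactor_X (n : ℕ) (i : Fin 3) : IsRelPrime (cofactor n) (X i) :=
  (X_prime.irreducible.isRelPrime_iff_not_dvd.mpr (not_X_dvd_cofactor n i)).symm

lemma snd_eq_zero_of_jacC_eq_zero {n j : ℕ} (hj : j < 2 * n)
    {v : Fin 3 → MvPolynomial (Fin 3) ℂ}
    (hv1 : (v 1).IsHomogeneous j) (hv : jacC (poly n) v = 0) : v 1 = 0 := by
  have hunit : IsUnit (2 * n : MvPolynomial (Fin 3) ℂ) := by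
    simpa only [map_mul, map_ofNat, map_natCast] using
      (IsUnit.mk0 (2 * n : ℂ) (mul_ne_zero two_ne_zero (Nat.cast_ne_zero.mpr (by omega)))).map
        (C : ℂ →+* MvPolynomial (Fin 3) ℂ)
  have hdvd : cofactor n ∣ X 0 * X 2 * X 1 ^ (2 * n - 1) * v 1 := by
    rw [← hunit.dvd_mul_left]
    exact ⟨-(X 2 * v 0 + X 0 * v 2), by rw [jacC_poly] at hv; linear_combination hv⟩
  have hcop : IsRelPrime (cofactor n) (X 0 * X 2 * X 1 ^ (2 * n - 1)) :=
    ((isRelPrime_cofactor_X n 0).mul_right (isRelPrime_cofactor_X n 2)).mul_right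
      (isRelPrime_cofactor_X n 1).pow_right
  exact hv1.eq_zero_of_dvd (totalDegree_cofactor n ▸ hj) (hcop.dvd_of_dvd_mul_left hdvd)

noncomputable def xzSyzygy : MvPolynomial (Fin 3) ℂ →ₗ[ℂ] (Fin 3 → MvPolynomial (Fin 3) ℂ) :=
  LinearMap.pi
    ![LinearMap.mulLeft ℂ (X 0), 0, -LinearMap.mulLeft ℂ (X 2 : MvPolynomial (Fin 3) ℂ)]

@[simp] lemma xzSyzygy_apply_zero (h : MvPolynomial (Fin 3) ℂ) : xzSyzygy h 0 = X 0 * h := rfl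
@[simp] lemma xzSyzygy_apply_one (h : MvPolynomial (Fin 3) ℂ) : xzSyzygy h 1 = 0 := rfl
@[simp] lemma xzSyzygy_apply_two (h : MvPolynomial (Fin 3) ℂ) : xzSyzygy h 2 = -(X 2 * h) := rfl

lemma xzSyzygy_injective : Function.Injective xzSyzygy :=
  fun _ _ h => mul_left_cancel₀ (X_ne_zero 0) (congr_fun h 0)

lemma jacC_xzSyzygy (n : ℕ) (h : MvPolynomial (Fin 3) ℂ) : jacC (poly n) (xzSyzygy h) = 0 := by
  rw [jacC_poly, xzSyzygy_apply_zero, xzSyzygy_apply_one, xzSyzygy_apply_two]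
  ring

lemma divC_xzSyzygy (h : MvPolynomial (Fin 3) ℂ) :
    divC (xzSyzygy h) = X 0 * pderiv 0 h - X 2 * pderiv 2 h := by
  simp only [divC_apply, xzSyzygy_apply_zero, xzSyzygy_apply_one, xzSyzygy_apply_two, map_zero,
    map_neg, pderiv_mul, pderiv_X_self]
  ring

theorem V_poly_eq_map {n j : ℕ} (hj : j + 1 < 2 * n) :
    V (poly n) (j + 1) = (restrictSupport ℂ (xzBalanced j)).map xzSyzygy := by
  ext v
  simp only [V, Submodule.mem_inf, Submodule.mem_pi, Set.mem_univ, forall_true_left,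
    LinearMap.mem_ker, mem_homogeneousSubmodule, Submodule.mem_map,
    mem_restrictSupport_xzBalanced_iff]
  constructor
  · rintro ⟨⟨hhom, hjac⟩, hdiv⟩
    have hv1 := snd_eq_zero_of_jacC_eq_zero hj (hhom 1) hjac
    rw [jacC_poly, hv1, mul_zero, mul_zero, add_zero, mul_eq_zero,
      or_iff_right (cofactor_ne_zero n)] at hjac
    obtain ⟨h, hv0, hv2⟩ := exists_eq_X_mul_of_X_mul_add_X_mul_eq_zero (by decide) hjac
    have hv : xzSyzygy h = v := by
      ext i : 1
      fin_cases i <;> simp [hv0, hv1, hv2]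
    refine ⟨h, ⟨IsHomogeneous.of_X_mul (hv0 ▸ hhom 0), ?_⟩, hv⟩
    rwa [← hv, divC_xzSyzygy, sub_eq_zero] at hdiv
  · rintro ⟨h, ⟨hhom, heuler⟩, rfl⟩
    refine ⟨⟨fun i => ?_, jacC_xzSyzygy n h⟩, by rw [divC_xzSyzygy, heuler, sub_self]⟩
    rw [add_comm]
    fin_cases i
    · exact (isHomogeneous_X ℂ 0).mul hhom
    · exact isHomogeneous_zero _ _ _
    · exact ((isHomogeneous_X ℂ 2).mul hhom).neg

end XZCurve

theorem stmt17_general (m d : ℕ) (hd : d = 2 * m) :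
    let f : MvPolynomial (Fin 3) ℂ := X 0 * X 2 * ((X 0 * X 2) ^ (m - 1) + X 1 ^ (2 * m - 2))
    ∀ j : ℕ, 1 ≤ j → j ≤ d - 3 → Module.finrank ℂ (V f j) = (j + 1) / 2 := by
  intro f j hj1 hj2
  obtain ⟨n, rfl⟩ : ∃ n, m = n + 1 := ⟨m - 1, by omega⟩
  obtain ⟨i, rfl⟩ : ∃ i, j = i + 1 := ⟨j - 1, by omega⟩
  have hf : f = XZCurve.poly n := by
    simp only [f, XZCurve.poly, Nat.add_sub_cancel, show 2 * (n + 1) - 2 = 2 * n by omega]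
  rw [hf, XZCurve.V_poly_eq_map (by omega),
    ← (Submodule.equivMapOfInjective _ XZCurve.xzSyzygy_injective _).finrank_eq,
    finrank_restrictSupport_xzBalanced]
  omega

theorem stmt17 (m d : ℕ) (hm : 2 ≤ m) (hd : d = 2 * m) :
    let f : MvPolynomial (Fin 3) ℂ := X 0 * X 2 * ((X 0 * X 2) ^ (m - 1) + X 1 ^ (2 * m - 2))
    ∀ j : ℕ, 1 ≤ j → j ≤ d - 3 → Module.finrank ℂ (V f j) = (j + 1) / 2 :=
  stmt17_general m d hd
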